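/- Conversely (uniqueness of separated solutions): under the same hypotheses (a(η_k) ≠ 0, d(η_k/q) ≠ 0, a(η_k/q) = 0, d(η_k) = 0 for all k), if Ψ : {0,1}^N → ℂ is a nonzero solution of the discrete system t(η_k q^{-h_k}) Ψ(h) = a(η_k q^{-h_k}) Ψ(T_k⁺ h) + d(η_k q^{-h_k}) Ψ(T_k⁻ h) for all k and h (with out-of-range values defined as 0), then necessarily t(η_k) t(η_k/q) = a(η_k) d(η_k/q) for all k, and Ψ(h) = Ψ(0,…,0) · ∏_{k=1}^N (t(η_k)/a(η_k))^{h_k} for all h, with Ψ(0,…,0) ≠ 0. -/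
import Mathlib


theorem separated_wave_function_uniqueness (N : ℕ) (hN : 1 ≤ N) (q : ℂ) (hq : q ≠ 0)
    (η : Fin N → ℂ) (hη : ∀ k, η k ≠ 0) (a d t : ℂ → ℂ)
    (ha0 : ∀ k : Fin N, a (η k / q) = 0) (hd0 : ∀ k : Fin N, d (η k) = 0)
    (ha : ∀ k : Fin N, a (η k) ≠ 0) (hd : ∀ k : Fin N, d (η k / q) ≠ 0)
    (Ψ : (Fin N → ℤ) → ℂ)
    (hout : ∀ h : Fin N → ℤ, (¬ ∀ k, h k = 0 ∨ h k = 1) → Ψ h = 0)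
    (hnz : ∃ h : Fin N → ℤ, (∀ k, h k = 0 ∨ h k = 1) ∧ Ψ h ≠ 0)
    (hbax : ∀ (k : Fin N) (h : Fin N → ℤ), (∀ j, h j = 0 ∨ h j = 1) →
      t (η k / q ^ (h k).toNat) * Ψ h
        = a (η k / q ^ (h k).toNat) * Ψ (Function.update h k (h k + 1))
          + d (η k / q ^ (h k).toNat) * Ψ (Function.update h k (h k - 1))) :
    (∀ k : Fin N, t (η k) * t (η k / q) = a (η k) * d (η k / q)) ∧
    (∀ h : Fin N → ℤ, (∀ k, h k = 0 ∨ h k = 1) →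
      Ψ h = Ψ (fun _ => 0) * ∏ k, (t (η k) / a (η k)) ^ (h k).toNat) ∧
    Ψ (fun _ => 0) ≠ 0 := by
  -- Lemma A: at h k = 0
  have hA : ∀ (k : Fin N) (h : Fin N → ℤ), (∀ j, h j = 0 ∨ h j = 1) → h k = 0 →
      t (η k) * Ψ h = a (η k) * Ψ (Function.update h k 1) := by
    intro k h hval hk0
    have hb := hbax k h hval
    rw [hk0] at hb
    simp only [Int.toNat_zero, pow_zero, div_one, zero_add, zero_sub] at hb
    have hz : Ψ (Function.update h k (-1)) = 0 := by
      apply hout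
      intro hall
      have := hall k
      simp [Function.update_self] at this
    rw [hb, hd0 k, hz]
    ring
  -- Lemma B: at h k = 1
  have hB : ∀ (k : Fin N) (h : Fin N → ℤ), (∀ j, h j = 0 ∨ h j = 1) → h k = 1 →
      t (η k / q) * Ψ h = d (η k / q) * Ψ (Function.update h k 0) := by
    intro k h hval hk1
    have hb := hbax k h hval
    rw [hk1] at hb
    norm_num at hb
    have hz : Ψ (Function.update h k 2) = 0 := by
      apply hout
      intro hall
      have := hall k
      simp [Function.update_self] at this
    rw [hb, ha0 k, hz]
    ring
  -- Product formula by induction on the number of 1-coordinates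
  have key : ∀ (n : ℕ) (h : Fin N → ℤ), (∀ k, h k = 0 ∨ h k = 1) →
      (Finset.univ.filter fun k => h k = 1).card = n →
      Ψ h = Ψ (fun _ => 0) * ∏ k, (t (η k) / a (η k)) ^ (h k).toNat := by
    intro n
    induction n with
    | zero =>
      intro h hval hcard
      have h0 : h = fun _ => 0 := by
        funext k
        rcases hval k with h1 | h1
        · exact h1
        · exfalso
          have hk : k ∈ Finset.univ.filter fun k => h k = 1 := by simp [h1]
          rw [Finset.card_eq_zero] at hcard
          simp [hcard] at hk
      subst h0
      simp
    | succ n ih =>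
      intro h hval hcard
      obtain ⟨k, hk⟩ : ∃ k, h k = 1 := by
        have hne : (Finset.univ.filter fun k => h k = 1).Nonempty :=
          Finset.card_pos.mp (by omega)
        obtain ⟨k, hk⟩ := hne
        exact ⟨k, (Finset.mem_filter.mp hk).2⟩
      set h' := Function.update h k 0 with hh'
      have hval' : ∀ j, h' j = 0 ∨ h' j = 1 := by
        intro j
        by_cases hj : j = k
        · subst hj; left; simp [hh']
        · simp [hh', Function.update_of_ne hj]; exact hval j
      have hcard' : (Finset.univ.filter fun j => h' j = 1).card = n := by
        have heq : (Finset.univ.filter fun j => h' j = 1)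
            = (Finset.univ.filter fun j => h j = 1).erase k := by
          ext j
          by_cases hj : j = k
          · subst hj; simp [hh']
          · simp [hh', Function.update_of_ne hj, hj]
        rw [heq, Finset.card_erase_of_mem (by simp [hk]), hcard]
        omega
      have hΨ := hA k h' hval' (by simp [hh'])
      have hupd : Function.update h' k 1 = h := by
        funext j
        by_cases hj : j = k
        · subst hj; simp [hh', hk]
        · simp [hh', Function.update_of_ne hj]
      rw [hupd] at hΨ
      have ihh := ih h' hval' hcard'
      have hΨh : Ψ h = (t (η k) / a (η k)) * Ψ h' := by
        rw [div_mul_eq_mul_div, eq_div_iff (ha k)]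
        linear_combination -hΨ
      have hprod : (∏ j, (t (η j) / a (η j)) ^ (h j).toNat)
          = (t (η k) / a (η k)) * ∏ j, (t (η j) / a (η j)) ^ (h' j).toNat := by
        rw [← Finset.prod_erase_mul Finset.univ _ (Finset.mem_univ k),
            ← Finset.prod_erase_mul Finset.univ _ (Finset.mem_univ k)]
        have he : ∀ j ∈ Finset.univ.erase k,
            (t (η j) / a (η j)) ^ (h j).toNat = (t (η j) / a (η j)) ^ (h' j).toNat := by
          intro j hj
          rw [Finset.mem_erase] at hj
          rw [hh', Function.update_of_ne hj.1]
        rw [Finset.prod_congr rfl he]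
        have : h' k = 0 := by simp [hh']
        rw [hk, this]
        norm_num
        ring
      rw [hΨh, ihh, hprod]
      ring
  have keyfin : ∀ h : Fin N → ℤ, (∀ k, h k = 0 ∨ h k = 1) →
      Ψ h = Ψ (fun _ => 0) * ∏ k, (t (η k) / a (η k)) ^ (h k).toNat := fun h hv =>
    key _ h hv rfl
  have hΨ0 : Ψ (fun _ => 0) ≠ 0 := by
    obtain ⟨h, hval, hne⟩ := hnz
    intro h0
    exact hne (by rw [keyfin h hval, h0, zero_mul])
  refine ⟨?_, keyfin, hΨ0⟩
  intro k
  set e1 : Fin N → ℤ := Function.update (fun _ => 0) k 1 with he1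
  have hval1 : ∀ j, e1 j = 0 ∨ e1 j = 1 := by
    intro j
    by_cases hj : j = k
    · subst hj; right; simp [he1]
    · left; simp [he1, Function.update_of_ne hj]
  have h1 : t (η k) * Ψ (fun _ => 0) = a (η k) * Ψ e1 := by
    have := hA k (fun _ => 0) (fun _ => Or.inl rfl) rfl
    simpa [he1] using this
  have h2 : t (η k / q) * Ψ e1 = d (η k / q) * Ψ (fun _ => 0) := by
    have := hB k e1 hval1 (by simp [he1])
    have hup : Function.update e1 k 0 = fun _ => 0 := by
      funext j
      by_cases hj : j = k
      · subst hj; simp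
      · simp [he1, Function.update_of_ne hj]
    rwa [hup] at this
  have : t (η k) * t (η k / q) * Ψ (fun _ => 0) = a (η k) * d (η k / q) * Ψ (fun _ => 0) := by
    calc t (η k) * t (η k / q) * Ψ (fun _ => 0)
        = t (η k / q) * (t (η k) * Ψ (fun _ => 0)) := by ring
      _ = t (η k / q) * (a (η k) * Ψ e1) := by rw [h1]
      _ = a (η k) * (t (η k / q) * Ψ e1) := by ring
      _ = a (η k) * (d (η k / q) * Ψ (fun _ => 0)) := by rw [h2]
      _ = a (η k) * d (η k / q) * Ψ (fun _ => 0) := by ring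
  exact mul_right_cancel₀ hΨ0 this
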